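/- Let f ∈ O_3 and let J be the family of segments I_1^k = [(0,1,1),(k,0,0)], I_2^k = [(1,0,1),(0,k,0)], I_3^k = [(1,1,0),(0,0,k)] for k ≥ 2. Then J ∩ Γ^1(f) contains at most one element, and if J ∩ Γ^1(f) is nonempty then either Γ^2(f) = ∅ or every 2-dimensional compact face of Γ(f) is exceptional (Γ^2(f) = E_f ≠ ∅). -/

import Mathlib

open Finset Filter Topology

/-- The `i`-th partial derivative of `f`. -/
noncomputable def pder {n : ℕ} (i : Fin n) (f : (Fin n → ℂ) → ℂ) : (Fin n → ℂ) → ℂ :=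
  fun z => fderiv ℂ f z (Pi.single i 1)

/-- The iterated partial derivative `∂^ν f` for a multi-index `ν`. -/
noncomputable def mder {n : ℕ} (ν : Fin n → ℕ) (f : (Fin n → ℂ) → ℂ) : (Fin n → ℂ) → ℂ :=
  ((List.finRange n).map fun i => (pder i)^[ν i]).foldr (fun g acc => g acc) f

/-- The support of the Taylor expansion of `f` at `0`. -/
def NSupp {n : ℕ} (f : (Fin n → ℂ) → ℂ) : Set (Fin n → ℕ) :=
  {ν | mder ν f 0 ≠ 0}

/-- The Taylor coefficient `a_ν` of `f` at `0`. -/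
noncomputable def coeffOf {n : ℕ} (f : (Fin n → ℂ) → ℂ) (ν : Fin n → ℕ) : ℂ :=
  mder ν f 0 / ((∏ i, (ν i).factorial : ℕ) : ℂ)

/-- The Newton diagram `Γ₊(f)`: the convex hull of `⋃_{ν ∈ supp f} (ν + ℝ₊ⁿ)`. -/
def NDiag {n : ℕ} (f : (Fin n → ℂ) → ℂ) : Set (Fin n → ℝ) :=
  convexHull ℝ {x | ∃ ν ∈ NSupp f, ∀ i, (ν i : ℝ) ≤ x i}

/-- `l(u, A) = inf {⟨u, v⟩ : v ∈ A}`. -/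
noncomputable def ell {n : ℕ} (u : Fin n → ℝ) (A : Set (Fin n → ℝ)) : ℝ :=
  sInf ((fun v => ∑ i, u i * v i) '' A)

/-- The face `Δ(u, A) = {v ∈ A : ⟨u, v⟩ = l(u, A)}`. -/
def faceOf {n : ℕ} (u : Fin n → ℝ) (A : Set (Fin n → ℝ)) : Set (Fin n → ℝ) :=
  {v | v ∈ A ∧ ∑ i, u i * v i = ell u A}

/-- `S` is a compact face of the Newton diagram of `f` (member of the Newton boundary). -/
def IsCompactFace {n : ℕ} (f : (Fin n → ℂ) → ℂ) (S : Set (Fin n → ℝ)) : Prop :=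
  ∃ u : Fin n → ℝ, (∀ i, 0 < u i) ∧ S = faceOf u (NDiag f)

/-- The dimension of a face, as the rank of the direction of its affine span. -/
noncomputable def faceDim {n : ℕ} (S : Set (Fin n → ℝ)) : ℕ :=
  Module.finrank ℝ (affineSpan ℝ S).direction

/-- `Γ^k(f)`: the `k`-dimensional compact faces of the Newton boundary of `f`. -/
def GammaK {n : ℕ} (f : (Fin n → ℂ) → ℂ) (k : ℕ) : Set (Set (Fin n → ℝ)) :=
  {S | IsCompactFace f S ∧ faceDim S = k}

/-- The quasihomogeneous polynomial `f_S = Σ_{ν ∈ S} a_ν z^ν`. -/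
noncomputable def facePoly {n : ℕ} (f : (Fin n → ℂ) → ℂ) (S : Set (Fin n → ℝ)) :
    (Fin n → ℂ) → ℂ :=
  fun z => ∑' ν : {ν : Fin n → ℕ // (fun i => (ν i : ℝ)) ∈ S}, coeffOf f ν.1 * ∏ i, z i ^ ν.1 i

/-- `f` is nondegenerate in the Kouchnirenko sense. -/
def Nondeg {n : ℕ} (f : (Fin n → ℂ) → ℂ) : Prop :=
  ∀ S, IsCompactFace f S →
    ¬∃ z : Fin n → ℂ, (∀ i, z i ≠ 0) ∧ ∀ i, pder i (facePoly f S) z = 0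

/-- `f` is a singularity: a nonzero holomorphic germ with `f 0 = 0`, `∇f 0 = 0`. -/
def IsSing {n : ℕ} (f : (Fin n → ℂ) → ℂ) : Prop :=
  AnalyticAt ℂ f 0 ∧ (¬∀ᶠ z in 𝓝 0, f z = 0) ∧ f 0 = 0 ∧ ∀ i, pder i f 0 = 0

/-- `f` is an isolated singularity: `∇f` has an isolated zero at `0`. -/
def IsIsolSing {n : ℕ} (f : (Fin n → ℂ) → ℂ) : Prop :=
  IsSing f ∧ ∃ r > (0 : ℝ), ∀ z : Fin n → ℂ, ‖z‖ < r → z ≠ 0 → ∃ i, pder i f z ≠ 0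

/-- Euclidean distance of a point of `ℝ³` to the `i`-th coordinate axis. -/
noncomputable def distAxis (i : Fin 3) (W : Fin 3 → ℝ) : ℝ :=
  Real.sqrt (∑ j ∈ Finset.univ.erase i, (W j) ^ 2)

/-- The vertices (0-dimensional compact faces of the Newton boundary of `f`) lying in `S`. -/
def vtxOf (f : (Fin 3 → ℂ) → ℂ) (S : Set (Fin 3 → ℝ)) : Set (Fin 3 → ℝ) :=
  {A | IsCompactFace f {A} ∧ A ∈ S}

/-- `S` is an exceptional face with respect to the axis `OX_i`: one of its vertices `W` is
at distance `1` from `OX_i` and the remaining vertices constitute a `1`-dimensional face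
lying in a coordinate plane containing `OX_i`. -/
def ExcWrt (f : (Fin 3 → ℂ) → ℂ) (i : Fin 3) (S : Set (Fin 3 → ℝ)) : Prop :=
  ∃ W ∈ vtxOf f S, distAxis i W = 1 ∧
    ∃ T ∈ GammaK f 1, (∃ j, j ≠ i ∧ T ⊆ {x : Fin 3 → ℝ | x j = 0}) ∧
      vtxOf f T = vtxOf f S \ {W}

/-- The set `E_f` of exceptional 2-dimensional faces of `f`. -/
def Ef (f : (Fin 3 → ℂ) → ℂ) : Set (Set (Fin 3 → ℝ)) :=
  {S | S ∈ GammaK f 2 ∧ ∃ i, ExcWrt f i S}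

/-- `I` is the segment `I_j^m` of the family `𝒥` for the given `m`. -/
def segJ (m : ℕ) (I : Set (Fin 3 → ℝ)) : Prop :=
  I = segment ℝ ![0, 1, 1] ![(m : ℝ), 0, 0] ∨
  I = segment ℝ ![1, 0, 1] ![0, (m : ℝ), 0] ∨
  I = segment ℝ ![1, 1, 0] ![0, 0, (m : ℝ)]

/-- `I` belongs to the family `𝒥 = {I_j^k : j = 1,2,3, k ≥ 2}`. -/
def InJ (I : Set (Fin 3 → ℝ)) : Prop := ∃ m : ℕ, 2 ≤ m ∧ segJ m I

/-!
If `I = [1 - eᵢ, k eᵢ]` is the face `Δ(u)` of `Γ₊(f)`, its two endpoints are the only support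
points on `Δ(u)`. For two such segments, the endpoints of each lie strictly above the face of the
other, which forces each `k` to exceed the other one; hence there is at most one.

Now let `Δ(w)` be a 2-dimensional face and let `i₁, i₂` be the two other indices. A support point
on `Δ(w)` other than the apex `A = 1 - eᵢ` has `x_{i₁} = 0` or `x_{i₂} = 0`, since otherwise it
dominates `A`. If `P` on `Δ(w)` had `P_{i₂} = 0 ≠ P_{i₁}` and `Q` had `Q_{i₁} = 0 ≠ Q_{i₂}`, then
`Q_{i₂} • P + P_{i₁} • Q` would be a nonnegative combination of the endpoints of `I`; as `P` and
`Q` lie strictly above `Δ(u)`, evaluating against `u` and `w` gives contradictory inequalities.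
So the support points on `Δ(w)` other than `A` lie in one coordinate plane `x_j = 0` and span the
edge `Δ(w + e_j)`, while `A` is the vertex `Δ(u + eᵢ)`: the face is exceptional with respect to
the third axis.
-/

theorem convexHull_inter_level_subset {E : Type*} [AddCommGroup E] [Module ℝ E]
    (φ : E →ₗ[ℝ] ℝ) {s : Set E} {c : ℝ} (hs : ∀ x ∈ s, c ≤ φ x) :
    convexHull ℝ s ∩ {x | φ x = c} ⊆ convexHull ℝ {x ∈ s | φ x = c} := by
  set t := convexHull ℝ {x ∈ s | φ x = c}
  have ht : ∀ x ∈ t, φ x = c := fun x hx =>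
    convexHull_min (fun y hy => hy.2) ((convex_singleton c).linear_preimage φ) hx
  -- `t` together with the open half-space `c < φ` is convex and contains `s`.
  have hconv : Convex ℝ ({x | c < φ x} ∪ t) := by
    refine convex_iff_forall_pos.2 fun x hx y hy a b ha hb hab => ?_
    by_cases hxy : x ∈ t ∧ y ∈ t
    · exact Or.inr (convex_convexHull ℝ _ hxy.1 hxy.2 ha.le hb.le hab)
    have hle : ∀ z ∈ {x | c < φ x} ∪ t, c ≤ φ z := by
      rintro z (hz | hz)
      exacts [hz.le, (ht z hz).ge]
    have hlt : c < φ x ∨ c < φ y := by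
      rcases hx with hx | hx
      · exact Or.inl hx
      rcases hy with hy | hy
      exacts [Or.inr hy, absurd ⟨hx, hy⟩ hxy]
    left
    show c < φ (a • x + b • y)
    rw [map_add, map_smul, map_smul, smul_eq_mul, smul_eq_mul]
    have hc : c = a * c + b * c := by rw [← add_mul, hab, one_mul]
    rcases hlt with h | h
    · nlinarith [mul_lt_mul_of_pos_left h ha, mul_le_mul_of_nonneg_left (hle y hy) hb.le]
    · nlinarith [mul_le_mul_of_nonneg_left (hle x hx) ha.le, mul_lt_mul_of_pos_left h hb]
  rintro x ⟨hx, hxc⟩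
  have hsub : s ⊆ {x | c < φ x} ∪ t := fun y hy =>
    (hs y hy).lt_or_eq.imp id fun h => subset_convexHull ℝ _ ⟨hy, h.symm⟩
  exact (convexHull_min hsub hconv hx).resolve_left fun h => h.ne' hxc

theorem dotProduct_lt_dotProduct_of_pos {ι : Type*} [Fintype ι] {u x y : ι → ℝ}
    (hu : ∀ i, 0 < u i) (hxy : x < y) : u ⬝ᵥ x < u ⬝ᵥ y := by
  obtain ⟨hle, i, hi⟩ := Pi.lt_def.1 hxy
  exact Finset.sum_lt_sum (fun j _ => mul_le_mul_of_nonneg_left (hle j) (hu j).le)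
    ⟨i, mem_univ i, mul_lt_mul_of_pos_left hi (hu i)⟩

theorem exists_forall_dotProduct_natCast_le {n : ℕ} {u : Fin n → ℝ} (hu : ∀ i, 0 < u i)
    {s : Set (Fin n → ℕ)} (hs : s.Nonempty) :
    ∃ ν ∈ s, ∀ μ ∈ s, u ⬝ᵥ (fun i => (ν i : ℝ)) ≤ u ⬝ᵥ (fun i => (μ i : ℝ)) := by
  obtain ⟨μ₀, hμ₀⟩ := hs
  set φ : (Fin n → ℕ) → ℝ := fun ν => u ⬝ᵥ (fun i => (ν i : ℝ))
  have hfin : {ν | φ ν ≤ φ μ₀}.Finite := by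
    refine (Set.finite_Iic fun i => ⌊φ μ₀ / u i⌋₊).subset fun ν hν i => Nat.le_floor ?_
    rw [le_div_iff₀' (hu i)]
    refine le_trans ?_ hν
    exact Finset.single_le_sum (f := fun j => u j * (ν j : ℝ))
      (fun j _ => mul_nonneg (hu j).le (Nat.cast_nonneg _)) (mem_univ i)
  obtain ⟨ν, hν, hmin⟩ := Set.exists_min_image _ φ (hfin.inter_of_right s) ⟨μ₀, hμ₀, le_refl (φ μ₀)⟩
  exact ⟨ν, hν.1, fun μ hμ => (le_total (φ μ) (φ μ₀)).elim (fun h => hmin μ ⟨hμ, h⟩)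
    fun h => (hmin μ₀ ⟨hμ₀, le_refl (φ μ₀)⟩).trans h⟩

section NewtonDiagram

variable {n : ℕ} {f : (Fin n → ℂ) → ℂ}

def realSupp (f : (Fin n → ℂ) → ℂ) : Set (Fin n → ℝ) :=
  (fun ν i => (ν i : ℝ)) '' NSupp f

def faceSupp (f : (Fin n → ℂ) → ℂ) (u : Fin n → ℝ) : Set (Fin n → ℝ) :=
  {x ∈ realSupp f | u ⬝ᵥ x = ell u (NDiag f)}

theorem mem_realSupp_of_faceSupp_eq_pair {u a b : Fin n → ℝ} (h : faceSupp f u = {a, b}) :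
    a ∈ realSupp f ∧ b ∈ realSupp f :=
  Set.pair_subset_iff.1 (h ▸ Set.sep_subset _ _)

theorem nonneg_of_mem_realSupp {x : Fin n → ℝ} (hx : x ∈ realSupp f) : 0 ≤ x := by
  obtain ⟨ν, -, rfl⟩ := hx
  exact fun i => Nat.cast_nonneg _

theorem eq_zero_or_one_le_of_mem_realSupp {x : Fin n → ℝ} (hx : x ∈ realSupp f) (i : Fin n) :
    x i = 0 ∨ 1 ≤ x i := by
  obtain ⟨ν, -, rfl⟩ := hx
  rcases Nat.eq_zero_or_pos (ν i) with h | h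
  · exact Or.inl (by simp [h])
  · exact Or.inr (show (1 : ℝ) ≤ ν i by exact_mod_cast h)

theorem realSupp_subset_NDiag : realSupp f ⊆ NDiag f := by
  rintro _ ⟨ν, hν, rfl⟩
  exact subset_convexHull ℝ _ ⟨ν, hν, fun i => le_rfl⟩

theorem realSupp_nonempty_of_mem_NDiag {x : Fin n → ℝ} (hx : x ∈ NDiag f) :
    (realSupp f).Nonempty := by
  obtain ⟨_, ν, hν, -⟩ := convexHull_nonempty_iff.1 ⟨x, hx⟩
  exact ⟨_, ν, hν, rfl⟩

theorem nonneg_of_mem_NDiag {x : Fin n → ℝ} (hx : x ∈ NDiag f) : 0 ≤ x := by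
  refine convexHull_min (t := Set.Ici 0) ?_ (convex_Ici 0) hx
  rintro y ⟨ν, -, hy⟩ i
  exact (Nat.cast_nonneg _).trans (hy i)

theorem ell_le_dotProduct {u x : Fin n → ℝ} (hu : 0 ≤ u) (hx : x ∈ NDiag f) :
    ell u (NDiag f) ≤ u ⬝ᵥ x :=
  csInf_le ⟨0, by
    rintro _ ⟨y, hy, rfl⟩
    exact dotProduct_nonneg_of_nonneg hu (nonneg_of_mem_NDiag hy)⟩ ⟨x, hx, rfl⟩

theorem ell_lt_dotProduct {u x : Fin n → ℝ} (hu : 0 ≤ u) (hx : x ∈ realSupp f)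
    (hxu : x ∉ faceSupp f u) : ell u (NDiag f) < u ⬝ᵥ x :=
  (ell_le_dotProduct hu (realSupp_subset_NDiag hx)).lt_of_ne fun h => hxu ⟨hx, h.symm⟩

theorem ell_eq_dotProduct_of_forall_le {u x : Fin n → ℝ} (hu : 0 ≤ u) (hx : x ∈ realSupp f)
    (hmin : ∀ y ∈ realSupp f, u ⬝ᵥ x ≤ u ⬝ᵥ y) : ell u (NDiag f) = u ⬝ᵥ x := by
  refine (ell_le_dotProduct hu (realSupp_subset_NDiag hx)).antisymm
    (le_csInf ⟨_, _, realSupp_subset_NDiag hx, rfl⟩ ?_)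
  rintro _ ⟨y, hy, rfl⟩
  refine convexHull_min ?_ ((convex_Ici (u ⬝ᵥ x)).linear_preimage
    (dotProductBilin ℝ ℝ u)) hy
  rintro z ⟨ν, hν, hz⟩
  exact (hmin _ ⟨ν, hν, rfl⟩).trans (dotProduct_le_dotProduct_of_nonneg_left hz hu)

theorem faceSupp_nonempty {u : Fin n → ℝ} (hu : ∀ i, 0 < u i) (hf : (realSupp f).Nonempty) :
    (faceSupp f u).Nonempty := by
  obtain ⟨ν, hν, hmin⟩ := exists_forall_dotProduct_natCast_le hu (Set.image_nonempty.1 hf)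
  have hmin' : ∀ y ∈ realSupp f, u ⬝ᵥ (fun i => (ν i : ℝ)) ≤ u ⬝ᵥ y := by
    rintro _ ⟨μ, hμ, rfl⟩
    exact hmin μ hμ
  exact ⟨_, ⟨ν, hν, rfl⟩,
    (ell_eq_dotProduct_of_forall_le (fun i => (hu i).le) ⟨ν, hν, rfl⟩ hmin').symm⟩

theorem faceOf_eq_convexHull_faceSupp {u : Fin n → ℝ} (hu : ∀ i, 0 < u i) :
    faceOf u (NDiag f) = convexHull ℝ (faceSupp f u) := by
  refine subset_antisymm ?_ (convexHull_min (fun x hx => ⟨realSupp_subset_NDiag hx.1, hx.2⟩) ?_)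
  · rintro x ⟨hx, hxu⟩
    refine convexHull_mono ?_ (convexHull_inter_level_subset (dotProductBilin ℝ ℝ u)
      (fun y hy => ell_le_dotProduct (fun i => (hu i).le) (subset_convexHull ℝ _ hy)) ⟨hx, hxu⟩)
    rintro y ⟨⟨ν, hν, hνy⟩, hyu⟩
    -- a generator of `Γ₊(f)` on the face is a support point, since `u` is strictly positive
    have hνy' : (fun i => (ν i : ℝ)) = y := eq_of_le_of_not_lt hνy fun hlt =>
      (dotProduct_lt_dotProduct_of_pos hu hlt).not_ge <| (hyu.trans_le
        (ell_le_dotProduct (fun i => (hu i).le) (realSupp_subset_NDiag ⟨ν, hν, rfl⟩)))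
    exact ⟨⟨ν, hν, hνy'⟩, hyu⟩
  · exact (convex_convexHull ℝ _).inter
      ((convex_singleton _).linear_preimage (dotProductBilin ℝ ℝ u))

theorem mem_realSupp_of_isCompactFace_singleton {x : Fin n → ℝ} (hx : IsCompactFace f {x}) :
    x ∈ realSupp f := by
  obtain ⟨u, hu, hxu⟩ := hx
  have hxN : x ∈ NDiag f := (hxu.le rfl).1
  obtain ⟨y, hy⟩ := faceSupp_nonempty hu (realSupp_nonempty_of_mem_NDiag hxN)
  have hyx : y = x := by
    rw [Set.mem_singleton_iff.symm, hxu, faceOf_eq_convexHull_faceSupp hu]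
    exact subset_convexHull ℝ _ hy
  exact hyx ▸ hy.1

theorem add_single_pos {u : Fin n → ℝ} (hu : ∀ l, 0 < u l) (i : Fin n) :
    ∀ l, 0 < (u + Pi.single i 1 : Fin n → ℝ) l := fun l =>
  add_pos_of_pos_of_nonneg (hu l)
    ((Pi.single_nonneg.2 zero_le_one : (0 : Fin n → ℝ) ≤ Pi.single i 1) l)

theorem faceSupp_add_single {u : Fin n → ℝ} (hu : ∀ i, 0 < u i) {i : Fin n}
    (h : ∃ x ∈ faceSupp f u, x i = 0) :
    faceSupp f (u + Pi.single i 1) = {x ∈ faceSupp f u | x i = 0} := by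
  obtain ⟨x₀, hx₀, hx₀i⟩ := h
  have hdot : ∀ x, (u + Pi.single i 1) ⬝ᵥ x = u ⬝ᵥ x + x i := fun x => by
    rw [add_dotProduct, single_dotProduct, one_mul]
  have hle : ∀ x ∈ realSupp f, ell u (NDiag f) ≤ u ⬝ᵥ x := fun x hx =>
    ell_le_dotProduct (fun i => (hu i).le) (realSupp_subset_NDiag hx)
  have hpos : 0 ≤ u + Pi.single i 1 := fun l => (add_single_pos hu i l).le
  have hell : ell (u + Pi.single i 1) (NDiag f) = ell u (NDiag f) := by
    rw [ell_eq_dotProduct_of_forall_le hpos hx₀.1, hdot, hx₀i, add_zero, hx₀.2]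
    intro y hy
    rw [hdot, hdot, hx₀i, add_zero, hx₀.2]
    have : (0 : ℝ) ≤ y i := nonneg_of_mem_realSupp hy i
    linarith [hle y hy]
  ext x
  simp only [faceSupp, Set.mem_ofPred_eq, hell, hdot]
  constructor
  · rintro ⟨hx, hxu⟩
    have hxle := hle x hx
    have : (0 : ℝ) ≤ x i := nonneg_of_mem_realSupp hx i
    exact ⟨⟨hx, by linarith⟩, by linarith⟩
  · rintro ⟨⟨hx, hxu⟩, hxi⟩
    exact ⟨hx, by rw [hxu, hxi, add_zero]⟩

end NewtonDiagram

section FaceDim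

variable {n : ℕ}

theorem faceDim_convexHull (s : Set (Fin n → ℝ)) : faceDim (convexHull ℝ s) = faceDim s := by
  rw [faceDim, faceDim, affineSpan_convexHull]

theorem faceDim_le_one_of_collinear {s : Set (Fin n → ℝ)} (hs : Collinear ℝ s) :
    faceDim s ≤ 1 := by
  rw [faceDim, direction_affineSpan]
  exact collinear_iff_finrank_le_one.1 hs

theorem one_le_faceDim {s : Set (Fin n → ℝ)} (hs : ¬ s.Subsingleton) : 1 ≤ faceDim s := by
  rw [faceDim, direction_affineSpan, Submodule.one_le_finrank_iff]
  exact fun h => hs ((vectorSpan_eq_bot_iff_subsingleton ℝ).1 h)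

theorem faceDim_add_two_le {i j : Fin n} (hij : i ≠ j) {w : Fin n → ℝ} (hwi : w i ≠ 0) {c : ℝ}
    {s : Set (Fin n → ℝ)} (hs : s ⊆ {x | x j = 0 ∧ w ⬝ᵥ x = c}) : faceDim s + 2 ≤ n := by
  set φ : (Fin n → ℝ) →ₗ[ℝ] ℝ × ℝ := (LinearMap.proj j).prod (dotProductBilin ℝ ℝ w)
  have hφ : Function.Surjective φ := by
    rintro ⟨a, b⟩
    refine ⟨Pi.single j a + Pi.single i ((b - w j * a) / w i), ?_⟩
    simp [φ, dotProduct_add, hij.symm]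
    field_simp
    ring
  have hdir : (affineSpan ℝ s).direction ≤ LinearMap.ker φ := by
    rw [direction_affineSpan, vectorSpan_def, Submodule.span_le]
    rintro _ ⟨x, hx, y, hy, rfl⟩
    simp [φ, LinearMap.mem_ker, (hs hx).1, (hs hy).1, dotProduct_sub, (hs hx).2, (hs hy).2]
  have hker := LinearMap.finrank_range_add_finrank_ker φ
  rw [LinearMap.range_eq_top.2 hφ, finrank_top, Module.finrank_prod, Module.finrank_self,
    Module.finrank_fin_fun] at hker
  have := Submodule.finrank_mono hdir
  rw [faceDim]
  omega

end FaceDim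

theorem eq_pair_of_convexHull_eq_segment {E : Type*} [AddCommGroup E] [Module ℝ E] {a b : E}
    (hab : a ≠ b) {t : Set E} (ht : t ⊆ {a, b}) (h : convexHull ℝ t = segment ℝ a b) :
    t = {a, b} := by
  rcases Set.subset_pair_iff_eq.1 ht with rfl | rfl | rfl | rfl
  · simpa [convexHull_empty] using (h ▸ left_mem_segment ℝ a b : a ∈ convexHull ℝ ∅)
  · rw [convexHull_singleton] at h
    exact absurd (h ▸ right_mem_segment ℝ a b : b ∈ ({a} : Set E)) hab.symm
  · rw [convexHull_singleton] at h
    exact absurd (h ▸ left_mem_segment ℝ a b : a ∈ ({b} : Set E)) hab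
  · rfl

section Segments

variable {n : ℕ} {f : (Fin n → ℂ) → ℂ}

-- With `i = 0, 1, 2`, `segment ℝ (apex i) (axisPt i k)` is the segment `I_{i+1}^k`.
def apex (i : Fin n) : Fin n → ℝ := 1 - Pi.single i 1

def axisPt (i : Fin n) (k : ℕ) : Fin n → ℝ := Pi.single i (k : ℝ)

@[simp] theorem apex_self (i : Fin n) : apex i i = 0 := by simp [apex]

@[simp] theorem apex_of_ne {i j : Fin n} (h : j ≠ i) : apex i j = 1 := by simp [apex, h]

@[simp] theorem axisPt_self (i : Fin n) (k : ℕ) : axisPt i k i = k := by simp [axisPt]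

@[simp] theorem axisPt_of_ne {i j : Fin n} (h : j ≠ i) (k : ℕ) : axisPt i k j = 0 := by
  simp [axisPt, h]

theorem dotProduct_apex (u : Fin n → ℝ) (i : Fin n) : u ⬝ᵥ apex i = ∑ j, u j - u i := by
  simp [apex, dotProduct_sub, dotProduct_one, dotProduct_single]

theorem dotProduct_axisPt (u : Fin n → ℝ) (i : Fin n) (k : ℕ) : u ⬝ᵥ axisPt i k = u i * k :=
  dotProduct_single _ _ _

theorem eq_or_eq_of_mem_segment {a b x : Fin n → ℝ} {j : Fin n} (hx : x ∈ segment ℝ a b)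
    (ha : a j = 1) (hb : b j = 0) (hxj : x j = 0 ∨ 1 ≤ x j) : x = a ∨ x = b := by
  obtain ⟨s, t, hs, ht, hst, rfl⟩ := hx
  have hj : (s • a + t • b) j = s := by simp [ha, hb]
  rw [hj] at hxj
  rcases hxj with h | h
  · exact Or.inr (by rw [h, show t = 1 by linarith]; simp)
  · exact Or.inl (by rw [show s = 1 by linarith, show t = 0 by linarith]; simp)

theorem faceSupp_eq_pair_of_segment_eq_faceOf {u : Fin n → ℝ} (hu : ∀ l, 0 < u l)
    {i j : Fin n} (hji : j ≠ i) {k : ℕ}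
    (h : segment ℝ (apex i) (axisPt i k) = faceOf u (NDiag f)) :
    faceSupp f u = {apex i, axisPt i k} := by
  have hhull : convexHull ℝ (faceSupp f u) = segment ℝ (apex i) (axisPt i k) :=
    ((faceOf_eq_convexHull_faceSupp hu).symm.trans h.symm)
  refine eq_pair_of_convexHull_eq_segment (fun h => by simpa [hji] using congrFun h j)
    (fun x hx => ?_) hhull
  exact eq_or_eq_of_mem_segment (hhull ▸ subset_convexHull ℝ _ hx) (apex_of_ne hji)
    (axisPt_of_ne hji k) (eq_zero_or_one_le_of_mem_realSupp hx.1 j)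

theorem lt_of_faceSupp_eq_pair {u : Fin n → ℝ} (hu : ∀ l, 0 < u l) {i j : Fin n} {k m : ℕ}
    (hk : 2 ≤ k) (hm : 2 ≤ m) (hne : (i, k) ≠ (j, m))
    (hface : faceSupp f u = {apex i, axisPt i k})
    (hA : apex j ∈ realSupp f) (hB : axisPt j m ∈ realSupp f) : k < m := by
  have hlt : ∀ x ∈ realSupp f, x ≠ apex i → x ≠ axisPt i k → ell u (NDiag f) < u ⬝ᵥ x :=
    fun x hx h1 h2 => ell_lt_dotProduct (fun l => (hu l).le) hx (by simp [hface, h1, h2])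
  have hmem : apex i ∈ faceSupp f u ∧ axisPt i k ∈ faceSupp f u := by simp [hface]
  have hBA : axisPt j m ≠ apex i := fun h => by
    have := congrFun h j
    by_cases hji : j = i <;> simp [hji] at this <;> omega
  by_cases hji : j = i
  · subst hji
    have hBB : axisPt j m ≠ axisPt j k := fun h => by
      have := congrFun h j
      simp only [axisPt_self, Nat.cast_inj] at this
      exact hne (by rw [this])
    have h := hlt _ hB hBA hBB
    rw [← hmem.2.2, dotProduct_axisPt, dotProduct_axisPt] at h
    exact_mod_cast lt_of_mul_lt_mul_left h (hu j).le
  · have hAA : apex j ≠ apex i := fun h => by simpa [Ne.symm hji] using congrFun h i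
    have hAB : apex j ≠ axisPt i k := fun h => by
      have : (1 : ℝ) = k := by simpa [Ne.symm hji] using congrFun h i
      have : 1 = k := by exact_mod_cast this
      omega
    have hBB : axisPt j m ≠ axisPt i k := fun h => by
      have := congrFun h j
      simp [hji] at this
      omega
    have h₁ := hlt _ hA hAA hAB
    have h₂ := hlt _ hB hBA hBB
    rw [← hmem.1.2, dotProduct_apex, dotProduct_apex] at h₁
    rw [← hmem.2.2, dotProduct_axisPt, dotProduct_axisPt] at h₂
    have : (k : ℝ) < m := by nlinarith [hu j]
    exact_mod_cast this

end Segments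

section Crossing

variable {n : ℕ} {f : (Fin n → ℂ) → ℂ}

theorem mem_faceSupp_of_smul_add_smul_eq {u w a b p q : Fin n → ℝ} (hu : 0 ≤ u)
    (hw : ∀ l, 0 < w l) (ha : a ∈ faceSupp f u) (hb : b ∈ faceSupp f u)
    (hp : p ∈ faceSupp f w) (hq : q ∈ faceSupp f w) (hp0 : p ≠ 0) {s t α β : ℝ}
    (hs : 0 < s) (ht : 0 < t) (hα : 0 ≤ α) (hβ : 0 ≤ β)
    (h : s • p + t • q = α • a + β • b) : p ∈ faceSupp f u ∨ q ∈ faceSupp f u := by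
  by_contra! hpq
  have hup := ell_lt_dotProduct hu hp.1 hpq.1
  have huq := ell_lt_dotProduct hu hq.1 hpq.2
  have hwa := ell_le_dotProduct (fun l => (hw l).le) (realSupp_subset_NDiag ha.1)
  have hwb := ell_le_dotProduct (fun l => (hw l).le) (realSupp_subset_NDiag hb.1)
  have hu0 : 0 ≤ ell u (NDiag f) :=
    ha.2 ▸ dotProduct_nonneg_of_nonneg hu (nonneg_of_mem_realSupp ha.1)
  have hw0 : 0 < ell w (NDiag f) := by
    simpa [hp.2] using
      dotProduct_lt_dotProduct_of_pos hw ((nonneg_of_mem_realSupp hp.1).lt_of_ne' hp0)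
  -- evaluating `h` against `u` gives `s + t < α + β`, against `w` gives `α + β ≤ s + t`
  have hu' := congrArg (u ⬝ᵥ ·) h
  have hw' := congrArg (w ⬝ᵥ ·) h
  simp only [dotProduct_add, dotProduct_smul, smul_eq_mul, ha.2, hb.2, hp.2, hq.2] at hu' hw'
  nlinarith [mul_le_mul_of_nonneg_left hwa hα, mul_le_mul_of_nonneg_left hwb hβ,
    mul_lt_mul_of_pos_left hup hs, mul_lt_mul_of_pos_left huq ht]

theorem apex_le_of_mem_realSupp {x : Fin n → ℝ} (hx : x ∈ realSupp f) {i : Fin n}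
    (h : ∀ j ≠ i, x j ≠ 0) : apex i ≤ x := by
  intro j
  by_cases hj : j = i
  · simpa [hj] using nonneg_of_mem_realSupp hx i
  · simpa [hj] using (eq_zero_or_one_le_of_mem_realSupp hx j).resolve_left (h j hj)

theorem eq_of_le_of_mem_faceSupp {w a x : Fin n → ℝ} (hw : ∀ l, 0 < w l) (ha : a ∈ NDiag f)
    (hax : a ≤ x) (hx : x ∈ faceSupp f w) : x = a :=
  (eq_of_le_of_not_lt hax fun hlt => (dotProduct_lt_dotProduct_of_pos hw hlt).not_ge <|
    hx.2.trans_le (ell_le_dotProduct (fun l => (hw l).le) ha)).symm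

theorem isCompactFace_singleton_of_faceSupp_eq_pair {u a b : Fin n → ℝ} (hu : ∀ l, 0 < u l)
    (hface : faceSupp f u = {a, b}) {i : Fin n} (ha : a i = 0) (hb : b i ≠ 0) :
    IsCompactFace f {a} := by
  have hu' := add_single_pos hu i
  refine ⟨u + Pi.single i 1, hu', ?_⟩
  rw [faceOf_eq_convexHull_faceSupp hu', faceSupp_add_single hu ⟨a, by simp [hface], ha⟩, hface]
  convert (convexHull_singleton a).symm using 2
  ext x
  constructor
  · rintro ⟨rfl | rfl, hx⟩
    exacts [rfl, absurd hx hb]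
  · rintro rfl
    exact ⟨Or.inl rfl, ha⟩

end Crossing

section ThreeSpace

variable {f : (Fin 3 → ℂ) → ℂ}

theorem mem_vtxOf_faceOf_iff {u x : Fin 3 → ℝ} :
    x ∈ vtxOf f (faceOf u (NDiag f)) ↔ IsCompactFace f {x} ∧ x ∈ faceSupp f u :=
  ⟨fun ⟨hx, hxu⟩ => ⟨hx, mem_realSupp_of_isCompactFace_singleton hx, hxu.2⟩,
    fun ⟨hx, hxu⟩ => ⟨hx, realSupp_subset_NDiag hxu.1, hxu.2⟩⟩

theorem fin3_eq_or_eq_or_eq {i₀ i₁ i₂ : Fin 3} (h01 : i₀ ≠ i₁) (h02 : i₀ ≠ i₂) (h12 : i₁ ≠ i₂)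
    (j : Fin 3) : j = i₀ ∨ j = i₁ ∨ j = i₂ := by
  revert i₀ i₁ i₂ j
  decide

theorem distAxis_apex {i i₀ : Fin 3} (h : i ≠ i₀) : distAxis i (apex i₀) = 1 := by
  fin_cases i <;> fin_cases i₀ <;>
    simp_all [distAxis, apex, Finset.sum_erase_eq_sub, Fin.sum_univ_three, Pi.single_apply]

theorem exists_eq_segment_of_segJ {k : ℕ} {I : Set (Fin 3 → ℝ)} (h : segJ k I) :
    ∃ i : Fin 3, I = segment ℝ (apex i) (axisPt i k) := by
  rcases h with rfl | rfl | rfl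
  exacts [⟨0, by congr 1 <;> funext j <;> fin_cases j <;> simp [apex, axisPt]⟩,
    ⟨1, by congr 1 <;> funext j <;> fin_cases j <;> simp [apex, axisPt]⟩,
    ⟨2, by congr 1 <;> funext j <;> fin_cases j <;> simp [apex, axisPt]⟩]

theorem exists_faceSupp_eq_pair_of_inJ {I : Set (Fin 3 → ℝ)} (hI : InJ I)
    (hI₁ : I ∈ GammaK f 1) :
    ∃ (i : Fin 3) (k : ℕ) (u : Fin 3 → ℝ), 2 ≤ k ∧ (∀ l, 0 < u l) ∧
      I = segment ℝ (apex i) (axisPt i k) ∧ faceSupp f u = {apex i, axisPt i k} := by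
  obtain ⟨k, hk, hseg⟩ := hI
  obtain ⟨⟨u, hu, hIu⟩, -⟩ := hI₁
  obtain ⟨i, rfl⟩ := exists_eq_segment_of_segJ hseg
  obtain ⟨j, hj⟩ := exists_ne i
  exact ⟨i, k, u, hk, hu, rfl, faceSupp_eq_pair_of_segment_eq_faceOf hu hj hIu⟩

theorem excWrt_of_faceSupp_subset_plane {w : Fin 3 → ℝ} (hw : ∀ l, 0 < w l)
    {S : Set (Fin 3 → ℝ)} (hS : S = faceOf w (NDiag f)) (hdim : faceDim S = 2)
    {a : Fin 3 → ℝ} (ha : IsCompactFace f {a}) {i j : Fin 3} (hij : i ≠ j)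
    (hai : distAxis i a = 1) (haj : a j ≠ 0) (hplane : ∀ x ∈ faceSupp f w, x ≠ a → x j = 0) :
    ExcWrt f i S := by
  have hSF : S = convexHull ℝ (faceSupp f w) := hS.trans (faceOf_eq_convexHull_faceSupp hw)
  have hdimF : faceDim (faceSupp f w) = 2 := by rw [← faceDim_convexHull, ← hSF, hdim]
  set V := faceSupp f w \ {a}
  have hVj : ∀ x ∈ V, x j = 0 := fun x hx => hplane x hx.1 hx.2
  have hVdim : faceDim V ≤ 1 := by
    have := faceDim_add_two_le hij (hw i).ne' fun x (hx : x ∈ V) => ⟨hVj x hx, hx.1.2⟩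
    omega
  have haF : a ∈ faceSupp f w := by
    by_contra h
    rw [show V = faceSupp f w from Set.sdiff_singleton_eq_self h] at hVdim
    omega
  have hV : ¬ V.Subsingleton := fun hV => by
    have hcol : Collinear ℝ (insert a V) := by
      rcases hV.eq_empty_or_singleton with h | ⟨v, h⟩ <;> rw [h]
      exacts [by simpa using collinear_singleton ℝ a, collinear_pair ℝ a v]
    have := faceDim_le_one_of_collinear
      (hcol.subset (Set.insert_sdiff_singleton ▸ Set.subset_insert a (faceSupp f w)))
    omega
  obtain ⟨p, hp⟩ := (Set.not_subsingleton_iff.1 hV).nonempty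
  have hVF : faceSupp f (w + Pi.single j 1) = V := by
    rw [faceSupp_add_single hw ⟨p, hp.1, hVj p hp⟩]
    ext x
    exact ⟨fun ⟨hx, hxj⟩ => ⟨hx, fun h : x = a => haj (h ▸ hxj)⟩, fun hx => ⟨hx.1, hVj x hx⟩⟩
  have hT : faceOf (w + Pi.single j 1) (NDiag f) = convexHull ℝ V := by
    rw [faceOf_eq_convexHull_faceSupp (add_single_pos hw j), hVF]
  refine ⟨a, ⟨ha, hSF ▸ subset_convexHull ℝ _ haF⟩, hai, convexHull ℝ V,
    ⟨⟨_, add_single_pos hw j, hT.symm⟩, ?_⟩,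
    ⟨j, hij.symm, convexHull_min hVj ((convex_singleton 0).linear_preimage (LinearMap.proj j))⟩,
    ?_⟩
  · rw [faceDim_convexHull]
    exact hVdim.antisymm (one_le_faceDim hV)
  · ext x
    rw [← hT, hS, Set.mem_sdiff, mem_vtxOf_faceOf_iff, mem_vtxOf_faceOf_iff, hVF]
    exact and_assoc.symm

theorem faceSupp_subset_plane_or_subset_plane {u w : Fin 3 → ℝ} (hu : ∀ l, 0 < u l)
    (hw : ∀ l, 0 < w l) {i₀ i₁ i₂ : Fin 3} (h01 : i₀ ≠ i₁) (h02 : i₀ ≠ i₂) (h12 : i₁ ≠ i₂)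
    {k : ℕ} (hk : k ≠ 0) (hface : faceSupp f u = {apex i₀, axisPt i₀ k}) :
    (∀ x ∈ faceSupp f w, x ≠ apex i₀ → x i₁ = 0) ∨
      (∀ x ∈ faceSupp f w, x ≠ apex i₀ → x i₂ = 0) := by
  have hcases := fin3_eq_or_eq_or_eq h01 h02 h12
  have hA : apex i₀ ∈ faceSupp f u := by simp [hface]
  have hB : axisPt i₀ k ∈ faceSupp f u := by simp [hface]
  have hdom : ∀ x ∈ faceSupp f w, x ≠ apex i₀ → x i₁ = 0 ∨ x i₂ = 0 := by
    intro x hx hxA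
    by_contra! h
    refine hxA (eq_of_le_of_mem_faceSupp hw (realSupp_subset_NDiag hA.1)
      (apex_le_of_mem_realSupp hx.1 fun j hj => ?_) hx)
    rcases hcases j with rfl | rfl | rfl
    exacts [absurd rfl hj, h.1, h.2]
  by_contra! h
  obtain ⟨⟨p, hp, hpA, hp₁⟩, ⟨q, hq, hqA, hq₂⟩⟩ := h
  have hp₂ : p i₂ = 0 := (hdom p hp hpA).resolve_left hp₁
  have hq₁ : q i₁ = 0 := (hdom q hq hqA).resolve_right hq₂
  have hp₁' : 0 < p i₁ := (nonneg_of_mem_realSupp hp.1 i₁).lt_of_ne' hp₁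
  have hq₂' : 0 < q i₂ := (nonneg_of_mem_realSupp hq.1 i₂).lt_of_ne' hq₂
  have hp₀ : 0 ≤ p i₀ := nonneg_of_mem_realSupp hp.1 i₀
  have hq₀ : 0 ≤ q i₀ := nonneg_of_mem_realSupp hq.1 i₀
  have hcomb : q i₂ • p + p i₁ • q = (p i₁ * q i₂) • apex i₀ +
      ((q i₂ * p i₀ + p i₁ * q i₀) / k) • axisPt i₀ k := by
    funext j
    rcases hcases j with rfl | rfl | rfl
    · simp [hk]
    · simp [Ne.symm h01, hq₁, mul_comm]
    · simp [Ne.symm h02, hp₂, mul_comm]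
  rcases mem_faceSupp_of_smul_add_smul_eq (fun l => (hu l).le) hw hA hB hp hq
      (fun h => hp₁ (by simp [h])) hq₂' hp₁' (by positivity) (by positivity) hcomb with h | h <;>
    simp only [hface, Set.mem_insert_iff, Set.mem_singleton_iff] at h
  · rcases h with h | h
    exacts [hpA h, hp₁ (h ▸ axisPt_of_ne (Ne.symm h01) k)]
  · rcases h with h | h
    exacts [hqA h, hq₂ (h ▸ axisPt_of_ne (Ne.symm h02) k)]

theorem excWrt_of_faceSupp_eq_pair {u : Fin 3 → ℝ} (hu : ∀ l, 0 < u l) {i₀ : Fin 3} {k : ℕ}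
    (hk : 2 ≤ k) (hface : faceSupp f u = {apex i₀, axisPt i₀ k}) {S : Set (Fin 3 → ℝ)}
    (hS : S ∈ GammaK f 2) : ∃ i, ExcWrt f i S := by
  obtain ⟨⟨w, hw, hSw⟩, hdim⟩ := hS
  have hothers : ∀ i : Fin 3, ∃ i₁ i₂ : Fin 3, i ≠ i₁ ∧ i ≠ i₂ ∧ i₁ ≠ i₂ := by decide
  obtain ⟨i₁, i₂, h01, h02, h12⟩ := hothers i₀
  have hk₀ : k ≠ 0 := by omega
  have hA : IsCompactFace f {apex i₀} :=
    isCompactFace_singleton_of_faceSupp_eq_pair hu hface (apex_self i₀) (by simpa using hk₀)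
  rcases faceSupp_subset_plane_or_subset_plane hu hw h01 h02 h12 hk₀ hface (w := w) with h | h
  · exact ⟨i₂, excWrt_of_faceSupp_subset_plane hw hSw hdim hA h12.symm
      (distAxis_apex (Ne.symm h02)) (by simp [Ne.symm h01]) h⟩
  · exact ⟨i₁, excWrt_of_faceSupp_subset_plane hw hSw hdim hA h12
      (distAxis_apex (Ne.symm h01)) (by simp [Ne.symm h02]) h⟩

end ThreeSpace

theorem stmt13_general (f : (Fin 3 → ℂ) → ℂ) :
    {I | InJ I ∧ I ∈ GammaK f 1}.Subsingleton ∧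
    ((∃ I, InJ I ∧ I ∈ GammaK f 1) →
      GammaK f 2 = ∅ ∨ (GammaK f 2 = Ef f ∧ (GammaK f 2).Nonempty)) := by
  refine ⟨fun I hI I' hI' => ?_, fun ⟨I, hI⟩ => ?_⟩
  · obtain ⟨i, k, u, hk, hu, rfl, hface⟩ := exists_faceSupp_eq_pair_of_inJ hI.1 hI.2
    obtain ⟨j, m, v, hm, hv, rfl, hface'⟩ := exists_faceSupp_eq_pair_of_inJ hI'.1 hI'.2
    by_cases hik : (i, k) = (j, m)
    · simp only [Prod.mk.injEq] at hik
      rw [hik.1, hik.2]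
    have hmem := mem_realSupp_of_faceSupp_eq_pair hface
    have hmem' := mem_realSupp_of_faceSupp_eq_pair hface'
    exact absurd (lt_of_faceSupp_eq_pair hu hk hm hik hface hmem'.1 hmem'.2)
      (lt_of_faceSupp_eq_pair hv hm hk (Ne.symm hik) hface' hmem.1 hmem.2).not_gt
  · obtain ⟨i, k, u, hk, hu, -, hface⟩ := exists_faceSupp_eq_pair_of_inJ hI.1 hI.2
    rcases (GammaK f 2).eq_empty_or_nonempty with h | h
    · exact Or.inl h
    · exact Or.inr ⟨subset_antisymm (fun S hS => ⟨hS, excWrt_of_faceSupp_eq_pair hu hk hface hS⟩)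
        fun S hS => hS.1, h⟩

/-- `𝒥 ∩ Γ¹(f)` has at most one element, and if it is nonempty then either
`Γ²(f) = ∅` or `Γ²(f) = E_f ≠ ∅`. -/
theorem stmt13 (f : (Fin 3 → ℂ) → ℂ) (hf : AnalyticAt ℂ f 0) :
    {I | InJ I ∧ I ∈ GammaK f 1}.Subsingleton ∧
    ((∃ I, InJ I ∧ I ∈ GammaK f 1) →
      GammaK f 2 = ∅ ∨ (GammaK f 2 = Ef f ∧ (GammaK f 2).Nonempty)) :=
  stmt13_general f
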